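/- arXiv:2405.11639 — 6 statements merged into one kernel-verified Lean document; each statement's English description precedes it below -/
import Mathlib

section
/- Let U be a finite set and let S_1, …, S_k and O_1, …, O_k be subsets of U such that for every i ∈ {1, …, k} it holds that |S_i \ (S_1 ∪ ⋯ ∪ S_{i−1})| ≥ |O_i \ (S_1 ∪ ⋯ ∪ S_{i−1})|. Then |S_1 ∪ ⋯ ∪ S_k| ≥ (1/2)·|O_1 ∪ ⋯ ∪ O_k|. -/
/-- Core counting argument for the 1/2-approximation of greedy max k-color cover:
if each `S i` covers at least as many elements not covered by `S 1, …, S (i-1)`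
as `O i` does, then the union of the `S i` has at least half the size of the
union of the `O i`. -/
theorem stmt_0 {α : Type*} [DecidableEq α] (k : ℕ) (S O : Fin k → Finset α)
    (h : ∀ i : Fin k,
      ((O i) \ (Finset.Iio i).biUnion S).card ≤ ((S i) \ (Finset.Iio i).biUnion S).card) :
    (Finset.univ.biUnion O).card ≤ 2 * (Finset.univ.biUnion S).card := by
  set X := Finset.univ.biUnion S with hX
  set T : Fin k → Finset α := fun i => S i \ (Finset.Iio i).biUnion S with hT
  have hprev : ∀ i : Fin k, (Finset.Iio i).biUnion S ⊆ X := by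
    intro i
    apply Finset.biUnion_subset_biUnion_of_subset_left
    exact Finset.subset_univ _
  -- pairwise disjointness of T
  have key : ∀ i j : Fin k, i < j → Disjoint (T i) (T j) := by
    intro i j hlt
    rw [Finset.disjoint_left]
    intro x hxi hxj
    simp only [hT, Finset.mem_sdiff, Finset.mem_biUnion, Finset.mem_Iio] at hxi hxj
    exact hxj.2 ⟨i, hlt, hxi.1⟩
  have hdisj : ∀ i ∈ Finset.univ, ∀ j ∈ Finset.univ, i ≠ j → Disjoint (T i) (T j) := by
    intro i _ j _ hij
    rcases lt_or_gt_of_ne hij with hlt | hgt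
    · exact key i j hlt
    · exact (key j i hgt).symm
  have hTsum : ∑ i, (T i).card = (Finset.univ.biUnion T).card :=
    (Finset.card_biUnion hdisj).symm
  have hTsub : Finset.univ.biUnion T ⊆ X := by
    apply Finset.biUnion_subset.mpr
    intro i _
    exact (Finset.sdiff_subset).trans (Finset.subset_biUnion_of_mem S (Finset.mem_univ i))
  have h5 : ∑ i, (T i).card ≤ X.card := hTsum ▸ Finset.card_le_card hTsub
  have h2 : (Finset.univ.biUnion O) \ X ⊆ Finset.univ.biUnion (fun i => O i \ X) := by
    intro x hx
    simp only [Finset.mem_sdiff, Finset.mem_biUnion, Finset.mem_univ, true_and] at hx ⊢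
    obtain ⟨⟨i, hi⟩, hxX⟩ := hx
    exact ⟨i, hi, hxX⟩
  have h3 : ((Finset.univ.biUnion O) \ X).card ≤ ∑ i, (O i \ X).card :=
    (Finset.card_le_card h2).trans (Finset.card_biUnion_le)
  have h4 : ∀ i : Fin k, (O i \ X).card ≤ (T i).card := by
    intro i
    refine le_trans (Finset.card_le_card (Finset.sdiff_subset_sdiff le_rfl (hprev i))) (h i)
  calc (Finset.univ.biUnion O).card
      ≤ ((Finset.univ.biUnion O) \ X).card + X.card :=
        Finset.card_le_card_sdiff_add_card
    _ ≤ (∑ i, (T i).card) + X.card := by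
        exact Nat.add_le_add_right (h3.trans (Finset.sum_le_sum fun i _ => h4 i)) _
    _ ≤ X.card + X.card := Nat.add_le_add_right h5 _
    _ = 2 * X.card := (two_mul _).symm
end

section
/- Suppose that for each element e_j ∈ U a real y_j ∈ [0,1] is given such that ∑_{i : e_j ∈ S_i} x_i ≥ y_j. Then the expected number of elements of U covered by the sampled family C is at least (1 − 1/e)·∑_j y_j. In particular, if ∑_j y_j ≥ OPT, where OPT is the maximum, over all choices of exactly one set per color, of the number of elements of U covered, then the expected number of elements covered by C is at least (1 − 1/e)·OPT. -/
open Finset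

private lemma exp_aux (t : ℝ) (h0 : 0 ≤ t) (h1 : t ≤ 1) :
    Real.exp (-t) ≤ 1 - (1 - Real.exp (-1)) * t := by
  have h := convexOn_exp.2 (Set.mem_univ (0:ℝ)) (Set.mem_univ (-1:ℝ))
    (by linarith : (0:ℝ) ≤ 1 - t) h0 (by ring)
  simp only [smul_eq_mul, mul_zero, mul_neg, mul_one, zero_add, Real.exp_zero] at h
  nlinarith [h]

private lemma base_prod {ι : Type*} [Fintype ι] (k : ℕ) (f : Fin k → ι → ℝ) :
    (∑ σ : Fin k → ι, ∏ h, f h (σ h)) = ∏ h, ∑ i, f h i := by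
  rw [Finset.prod_univ_sum, Fintype.piFinset_univ]

private lemma per_elem {α ι : Type*} [DecidableEq α] [Fintype ι]
    (k : ℕ) (S : ι → Finset α) (color : ι → Fin k) (x : ι → ℝ)
    (hx : ∀ i, 0 ≤ x i)
    (hsum : ∀ h : Fin k, ∑ i ∈ univ.filter (fun i => color i = h), x i = 1)
    (e : α) (ye : ℝ) (hy0 : 0 ≤ ye) (hy1 : ye ≤ 1)
    (hcov : ye ≤ ∑ i ∈ univ.filter (fun i => e ∈ S i), x i) :
    (1 - Real.exp (-1)) * ye ≤
      ∑ σ : Fin k → ι, (∏ h, if color (σ h) = h then x (σ h) else 0) *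
        (if ∃ h, e ∈ S (σ h) then (1:ℝ) else 0) := by
  classical
  set q : Fin k → ℝ := fun h => ∑ i ∈ univ.filter (fun i => color i = h),
    (if e ∈ S i then x i else 0) with hqdef
  have hq0 : ∀ h, 0 ≤ q h := by
    intro h
    apply sum_nonneg
    intro i _
    split_ifs
    · exact hx i
    · exact le_rfl
  have hq1 : ∀ h, q h ≤ 1 := by
    intro h
    rw [← hsum h]
    apply sum_le_sum
    intro i _
    split_ifs
    · exact le_rfl
    · exact hx i
  have hqsum : ye ≤ ∑ h, q h := by
    have : ∑ h, q h = ∑ i ∈ univ.filter (fun i => e ∈ S i), x i := by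
      simp only [hqdef]
      rw [Finset.sum_fiberwise (g := color) (f := fun i => if e ∈ S i then x i else 0)]
      rw [Finset.sum_filter]
    rw [this]; exact hcov
  have hs1 : (∑ σ : Fin k → ι, ∏ h, (if color (σ h) = h then x (σ h) else 0)) = 1 := by
    rw [base_prod k (fun h i => if color i = h then x i else 0)]
    rw [Finset.prod_eq_one]
    intro h _
    rw [← Finset.sum_filter]
    exact hsum h
  have hs2 : (∑ σ : Fin k → ι, ∏ h, (if color (σ h) = h ∧ e ∉ S (σ h) then x (σ h) else 0))
      = ∏ h, (1 - q h) := by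
    rw [base_prod k (fun h i => if color i = h ∧ e ∉ S i then x i else 0)]
    apply Finset.prod_congr rfl
    intro h _
    have h1 : (∑ i, if color i = h ∧ e ∉ S i then x i else 0)
        = ∑ i ∈ univ.filter (fun i => color i = h), (if e ∉ S i then x i else 0) := by
      rw [Finset.sum_filter]
      apply Finset.sum_congr rfl
      intro i _
      by_cases hc : color i = h <;> simp [hc]
    have h2 : q h + ∑ i ∈ univ.filter (fun i => color i = h), (if e ∉ S i then x i else 0)
        = 1 := by
      rw [hqdef, ← Finset.sum_add_distrib]
      rw [← hsum h]
      apply Finset.sum_congr rfl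
      intro i _
      by_cases hc : e ∈ S i <;> simp [hc]
    rw [h1]
    linarith
  have hsplit : ∀ σ : Fin k → ι,
      (∏ h, if color (σ h) = h then x (σ h) else 0) * (if ∃ h, e ∈ S (σ h) then (1:ℝ) else 0)
        = (∏ h, if color (σ h) = h then x (σ h) else 0)
          - ∏ h, (if color (σ h) = h ∧ e ∉ S (σ h) then x (σ h) else 0) := by
    intro σ
    by_cases hp : ∃ h, e ∈ S (σ h)
    · obtain ⟨h0, hh0⟩ := hp
      rw [if_pos ⟨h0, hh0⟩, mul_one]
      have : (∏ h, (if color (σ h) = h ∧ e ∉ S (σ h) then x (σ h) else 0)) = 0 := by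
        apply Finset.prod_eq_zero (Finset.mem_univ h0)
        simp [hh0]
      rw [this]; ring
    · push_neg at hp
      rw [if_neg (by push_neg; exact hp), mul_zero]
      have : (∏ h, (if color (σ h) = h ∧ e ∉ S (σ h) then x (σ h) else 0))
          = ∏ h, (if color (σ h) = h then x (σ h) else 0) := by
        apply Finset.prod_congr rfl
        intro h _
        simp [hp h]
      rw [this]; ring
  have hA : (∑ σ : Fin k → ι, (∏ h, if color (σ h) = h then x (σ h) else 0) *
      (if ∃ h, e ∈ S (σ h) then (1:ℝ) else 0)) = 1 - ∏ h, (1 - q h) := by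
    rw [Finset.sum_congr rfl (fun σ _ => hsplit σ), Finset.sum_sub_distrib, hs1, hs2]
  rw [hA]
  have hprod : (∏ h, (1 - q h)) ≤ Real.exp (-ye) := by
    calc (∏ h, (1 - q h)) ≤ ∏ h, Real.exp (-(q h)) := by
          apply Finset.prod_le_prod
          · intro h _; linarith [hq1 h]
          · intro h _
            have := Real.add_one_le_exp (-(q h))
            linarith
      _ = Real.exp (∑ h, -(q h)) := (Real.exp_sum _ _).symm
      _ ≤ Real.exp (-ye) := by
          apply Real.exp_le_exp.2
          rw [Finset.sum_neg_distrib]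
          linarith
  have := exp_aux ye hy0 hy1
  nlinarith [hprod, this]

/-- Lemma 4.7 / Theorem 4.8: in the sampling model (one set per color, set `S i`
sampled with probability `x i`, per-color probabilities summing to 1), if for
every element `e` of the universe `U` a real `y e ∈ [0,1]` satisfies the LP
constraint `∑_{i : e ∈ S i} x i ≥ y e`, then the expected number of elements of
`U` covered by the sampled family is at least `(1 - 1/e) * ∑ y e`; in
particular, if `∑ y e` dominates the integral optimum `OPT` of max k-color
cover (the maximum, over all selections of exactly one set per color, of the
number of covered elements), then the expected coverage is at least
`(1 - 1/e) * OPT`. -/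
theorem stmt_2 {α ι : Type*} [DecidableEq α] [Fintype ι] [DecidableEq ι]
    (k : ℕ) (S : ι → Finset α) (color : ι → Fin k) (x : ι → ℝ)
    (hx : ∀ i, 0 ≤ x i)
    (hsum : ∀ h : Fin k, ∑ i ∈ Finset.univ.filter (fun i => color i = h), x i = 1)
    (U : Finset α) (y : α → ℝ)
    (hy0 : ∀ e ∈ U, 0 ≤ y e) (hy1 : ∀ e ∈ U, y e ≤ 1)
    (hcov : ∀ e ∈ U, y e ≤ ∑ i ∈ Finset.univ.filter (fun i => e ∈ S i), x i) :
    (1 - Real.exp (-1)) * (∑ e ∈ U, y e) ≤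
      ∑ σ : Fin k → ι, (∏ h, if color (σ h) = h then x (σ h) else 0) *
        ((U.filter (fun e => ∃ h, e ∈ S (σ h))).card : ℝ) ∧
    ((((Finset.univ.filter (fun σ : Fin k → ι => ∀ h, color (σ h) = h)).sup
          (fun σ => (U.filter (fun e => ∃ h, e ∈ S (σ h))).card) : ℕ) : ℝ) ≤ ∑ e ∈ U, y e →
      (1 - Real.exp (-1)) *
          (((Finset.univ.filter (fun σ : Fin k → ι => ∀ h, color (σ h) = h)).sup
            (fun σ => (U.filter (fun e => ∃ h, e ∈ S (σ h))).card) : ℕ) : ℝ) ≤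
        ∑ σ : Fin k → ι, (∏ h, if color (σ h) = h then x (σ h) else 0) *
          ((U.filter (fun e => ∃ h, e ∈ S (σ h))).card : ℝ)) := by
  classical
  have hcard : ∀ σ : Fin k → ι, ((U.filter (fun e => ∃ h, e ∈ S (σ h))).card : ℝ)
      = ∑ e ∈ U, (if ∃ h, e ∈ S (σ h) then (1:ℝ) else 0) := by
    intro σ
    rw [Finset.card_filter]
    push_cast
    apply Finset.sum_congr rfl
    intro e _
    split_ifs <;> norm_num
  have key : (1 - Real.exp (-1)) * (∑ e ∈ U, y e) ≤
      ∑ σ : Fin k → ι, (∏ h, if color (σ h) = h then x (σ h) else 0) *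
        ((U.filter (fun e => ∃ h, e ∈ S (σ h))).card : ℝ) := by
    calc (1 - Real.exp (-1)) * (∑ e ∈ U, y e)
        = ∑ e ∈ U, (1 - Real.exp (-1)) * y e := by rw [Finset.mul_sum]
      _ ≤ ∑ e ∈ U, ∑ σ : Fin k → ι, (∏ h, if color (σ h) = h then x (σ h) else 0) *
            (if ∃ h, e ∈ S (σ h) then (1:ℝ) else 0) := by
          apply Finset.sum_le_sum
          intro e he
          exact per_elem k S color x hx hsum e (y e) (hy0 e he) (hy1 e he) (hcov e he)
      _ = ∑ σ : Fin k → ι, (∏ h, if color (σ h) = h then x (σ h) else 0) *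
            ((U.filter (fun e => ∃ h, e ∈ S (σ h))).card : ℝ) := by
          rw [Finset.sum_comm]
          apply Finset.sum_congr rfl
          intro σ _
          rw [hcard σ, Finset.mul_sum]
  refine ⟨key, fun hOPT => le_trans ?_ key⟩
  apply mul_le_mul_of_nonneg_left hOPT
  have : Real.exp (-1) ≤ Real.exp 0 := Real.exp_le_exp.2 (by norm_num)
  simp only [Real.exp_zero] at this
  linarith
end

section
/- Let C ⊆ 𝒮 be a cover, and assume that |𝒮_h| ≥ |C| for every color h. Then there exists a fair cover X with C ⊆ X and |X| ≤ k·|C|. Consequently, if moreover |C| ≤ α·c*, where α ≥ 1 and c* is the minimum size of a cover of (U, 𝒮), then |X| ≤ k·α·x*, where x* is the minimum size of a fair cover of (U, 𝒮). -/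
/-- Padding argument behind the Naive Algorithm (Lemma 3.1).  Set system: a
universe `U`, sets `S i ⊆ U` (indexed by `ι`) whose union is `U`, each set
carrying one of `k` colors.  A cover is a subfamily whose union contains `U`;
a fair cover (count parity) is a cover containing exactly `|X|/k` sets of each
color.  If `C` is a cover and every color class has at least `|C|` sets, then
there is a fair cover `X ⊇ C` with `|X| ≤ k·|C|`; moreover, if `|C| ≤ a·c*`
with `a ≥ 1`, `c*` the minimum cover size and `x*` the minimum fair-cover size,
then `|X| ≤ k·a·x*`. -/
theorem stmt_4 {V ι : Type*} [DecidableEq V] [Fintype ι] [DecidableEq ι]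
    (U : Finset V) (k : ℕ) (S : ι → Finset V) (color : ι → Fin k)
    (hUnion : Finset.univ.biUnion S = U)
    (C : Finset ι) (hC : ∀ e ∈ U, ∃ i ∈ C, e ∈ S i)
    (hsize : ∀ h : Fin k, C.card ≤ (Finset.univ.filter (fun i => color i = h)).card)
    (a : ℝ) (ha : 1 ≤ a)
    (Cstar : Finset ι) (hCstar : ∀ e ∈ U, ∃ i ∈ Cstar, e ∈ S i)
    (hCmin : ∀ D : Finset ι, (∀ e ∈ U, ∃ i ∈ D, e ∈ S i) → Cstar.card ≤ D.card)
    (Xstar : Finset ι) (hXstarCover : ∀ e ∈ U, ∃ i ∈ Xstar, e ∈ S i)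
    (hXstarFair : ∀ h : Fin k, k * (Xstar.filter (fun i => color i = h)).card = Xstar.card)
    (hXstarMin : ∀ D : Finset ι, (∀ e ∈ U, ∃ i ∈ D, e ∈ S i) →
      (∀ h : Fin k, k * (D.filter (fun i => color i = h)).card = D.card) →
      Xstar.card ≤ D.card) :
    ∃ X : Finset ι, C ⊆ X ∧ (∀ e ∈ U, ∃ i ∈ X, e ∈ S i) ∧
      (∀ h : Fin k, k * (X.filter (fun i => color i = h)).card = X.card) ∧
      X.card ≤ k * C.card ∧
      ((C.card : ℝ) ≤ a * (Cstar.card : ℝ) →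
        (X.card : ℝ) ≤ (k : ℝ) * a * (Xstar.card : ℝ)) := by
  rcases Nat.eq_zero_or_pos k with hk | hk
  · subst hk
    haveI : IsEmpty ι := ⟨fun i => (color i).elim0⟩
    have hCe : C = ∅ := Finset.eq_empty_of_isEmpty C
    have hUe : U = ∅ := by
      rw [← hUnion, Finset.eq_empty_of_isEmpty (Finset.univ : Finset ι)]
      simp
    exact ⟨∅, by simp [hCe], by simp [hUe], fun h => h.elim0, by simp, by simp⟩
  · have hmem : ∀ h : Fin k, ∃ u : Finset ι,
        C.filter (fun i => color i = h) ⊆ u ∧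
        u ⊆ Finset.univ.filter (fun i => color i = h) ∧ u.card = C.card := by
      intro h
      exact Finset.exists_subsuperset_card_eq
        (Finset.filter_subset_filter _ (Finset.subset_univ C))
        (Finset.card_filter_le _ _) (hsize h)
    choose u hu1 hu2 hu3 using hmem
    set X : Finset ι := Finset.univ.biUnion u with hX
    have hcolor : ∀ h (i : ι), i ∈ u h → color i = h := by
      intro h i hi
      have := hu2 h hi
      simpa using this
    have hfilter : ∀ h : Fin k, X.filter (fun i => color i = h) = u h := by
      intro h
      ext i
      simp only [Finset.mem_filter, hX, Finset.mem_biUnion, Finset.mem_univ, true_and]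
      constructor
      · rintro ⟨⟨h', hi⟩, hc⟩
        have : h' = h := (hcolor h' i hi).symm.trans hc
        rwa [this] at hi
      · intro hi
        exact ⟨⟨h, hi⟩, hcolor h i hi⟩
    have hCX : C ⊆ X := by
      intro i hi
      rw [hX, Finset.mem_biUnion]
      exact ⟨color i, Finset.mem_univ _, hu1 (color i) (Finset.mem_filter.mpr ⟨hi, rfl⟩)⟩
    have hdisj : ∀ h1 ∈ (Finset.univ : Finset (Fin k)), ∀ h2 ∈ Finset.univ,
        h1 ≠ h2 → Disjoint (u h1) (u h2) := by
      intro h1 _ h2 _ hne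
      rw [Finset.disjoint_left]
      intro i hi1 hi2
      exact hne ((hcolor h1 i hi1).symm.trans (hcolor h2 i hi2))
    have hcard : X.card = k * C.card := by
      rw [hX, Finset.card_biUnion hdisj]
      simp [hu3, Finset.sum_const]
    refine ⟨X, hCX, fun e he => ?_, fun h => ?_, le_of_eq hcard, fun hle => ?_⟩
    · obtain ⟨i, hi, hei⟩ := hC e he
      exact ⟨i, hCX hi, hei⟩
    · rw [hfilter h, hu3, hcard]
    · have h1 : (Cstar.card : ℝ) ≤ (Xstar.card : ℝ) := by
        exact_mod_cast hCmin Xstar hXstarCover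
      have hk' : (1 : ℝ) ≤ (k : ℝ) := by exact_mod_cast hk
      have hXc : (X.card : ℝ) = (k : ℝ) * (C.card : ℝ) := by
        rw [hcard]; push_cast; ring
      have h2 : a * (Cstar.card : ℝ) ≤ a * (Xstar.card : ℝ) :=
        mul_le_mul_of_nonneg_left h1 (by linarith)
      have h3 : (C.card : ℝ) ≤ a * (Xstar.card : ℝ) := le_trans hle h2
      calc (X.card : ℝ) = (k : ℝ) * (C.card : ℝ) := hXc
        _ ≤ (k : ℝ) * (a * (Xstar.card : ℝ)) :=
            mul_le_mul_of_nonneg_left h3 (by linarith)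
        _ = (k : ℝ) * a * (Xstar.card : ℝ) := by ring
end

section
/- Let C ⊆ 𝒮 be a cover and assume |𝒮_h| ≥ |C| for every color h. Then there exists a fair cover X with C ⊆ X and w(X) ≤ (1 + (k−1)Δ)·w(C) ≤ kΔ·w(C). Consequently, if moreover w(C) ≤ α·w(C*) where α ≥ 1 and C* is a minimum-weight cover of (U, 𝒮, w), then w(X) ≤ kΔ·α·w(X*_w), where X*_w is a minimum-weight fair cover. -/
/-- Weighted padding argument (Theorem 5.1).  Set system with positive weights
`w`, `Δ = w_max / w_min`.  If `C` is a cover and each color class has at least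
`|C|` sets, then there is a fair cover `X ⊇ C` (count parity) with
`w(X) ≤ (1 + (k-1)Δ)·w(C) ≤ kΔ·w(C)`; moreover, if `w(C) ≤ a·w(C*)` with
`a ≥ 1` and `C*` a minimum-weight cover, then `w(X) ≤ kΔ·a·w(X*_w)` where
`X*_w` is a minimum-weight fair cover. -/
theorem stmt_6 {V ι : Type*} [DecidableEq V] [Fintype ι] [DecidableEq ι] [Nonempty ι]
    (U : Finset V) (k : ℕ) (S : ι → Finset V) (color : ι → Fin k)
    (hUnion : Finset.univ.biUnion S = U)
    (w : ι → ℝ) (hw : ∀ i, 0 < w i)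
    (Δ : ℝ)
    (hΔ : Δ = (Finset.univ.sup' Finset.univ_nonempty w) /
              (Finset.univ.inf' Finset.univ_nonempty w))
    (C : Finset ι) (hC : ∀ e ∈ U, ∃ i ∈ C, e ∈ S i)
    (hsize : ∀ h : Fin k, C.card ≤ (Finset.univ.filter (fun i => color i = h)).card)
    (a : ℝ) (ha : 1 ≤ a)
    (Cstar : Finset ι) (hCstar : ∀ e ∈ U, ∃ i ∈ Cstar, e ∈ S i)
    (hCmin : ∀ D : Finset ι, (∀ e ∈ U, ∃ i ∈ D, e ∈ S i) →
      ∑ i ∈ Cstar, w i ≤ ∑ i ∈ D, w i)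
    (Xstarw : Finset ι) (hXstarCover : ∀ e ∈ U, ∃ i ∈ Xstarw, e ∈ S i)
    (hXstarFair : ∀ h : Fin k, k * (Xstarw.filter (fun i => color i = h)).card = Xstarw.card)
    (hXstarMin : ∀ D : Finset ι, (∀ e ∈ U, ∃ i ∈ D, e ∈ S i) →
      (∀ h : Fin k, k * (D.filter (fun i => color i = h)).card = D.card) →
      ∑ i ∈ Xstarw, w i ≤ ∑ i ∈ D, w i) :
    ∃ X : Finset ι, C ⊆ X ∧ (∀ e ∈ U, ∃ i ∈ X, e ∈ S i) ∧
      (∀ h : Fin k, k * (X.filter (fun i => color i = h)).card = X.card) ∧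
      ∑ i ∈ X, w i ≤ (1 + ((k : ℝ) - 1) * Δ) * ∑ i ∈ C, w i ∧
      ∑ i ∈ X, w i ≤ (k : ℝ) * Δ * ∑ i ∈ C, w i ∧
      (∑ i ∈ C, w i ≤ a * ∑ i ∈ Cstar, w i →
        ∑ i ∈ X, w i ≤ (k : ℝ) * Δ * a * ∑ i ∈ Xstarw, w i) := by
  have hk : 0 < k := (color (Classical.arbitrary ι)).pos
  set wM := Finset.univ.sup' Finset.univ_nonempty w with hwM
  set wm := Finset.univ.inf' Finset.univ_nonempty w with hwm
  have hwm_pos : 0 < wm := by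
    rw [hwm, Finset.lt_inf'_iff]
    exact fun i _ => hw i
  have hle : ∀ i : ι, wm ≤ w i := fun i => Finset.inf'_le _ (Finset.mem_univ i)
  have hge : ∀ i : ι, w i ≤ wM := fun i => Finset.le_sup' _ (Finset.mem_univ i)
  have hΔwm : Δ * wm = wM := by rw [hΔ, div_mul_cancel₀]; exact hwm_pos.ne'
  have hΔ1 : 1 ≤ Δ := by
    rw [hΔ, le_div_iff₀ hwm_pos, one_mul]
    exact (hle (Classical.arbitrary ι)).trans (hge _)
  set m := C.card with hm
  have hT : ∀ h : Fin k, ∃ T : Finset ι, C.filter (fun i => color i = h) ⊆ T ∧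
      T ⊆ Finset.univ.filter (fun i => color i = h) ∧ T.card = m := by
    intro h
    exact Finset.exists_subsuperset_card_eq
      (by intro i hi; simp only [Finset.mem_filter] at hi ⊢; exact ⟨Finset.mem_univ i, hi.2⟩)
      (Finset.card_filter_le _ _) (hsize h)
  choose T hT1 hT2 hT3 using hT
  have hTcolor : ∀ h i, i ∈ T h → color i = h := by
    intro h i hi
    have := hT2 h hi
    simpa using this
  set X := Finset.univ.biUnion T with hX
  have hmemX : ∀ i, i ∈ X ↔ i ∈ T (color i) := by
    intro i
    simp only [hX, Finset.mem_biUnion, Finset.mem_univ, true_and]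
    constructor
    · rintro ⟨h, hi⟩; rwa [hTcolor h i hi]
    · intro hi; exact ⟨_, hi⟩
  have hCX : C ⊆ X := by
    intro i hi
    rw [hmemX]
    exact hT1 (color i) (Finset.mem_filter.2 ⟨hi, rfl⟩)
  have hfilter : ∀ h, X.filter (fun i => color i = h) = T h := by
    intro h
    ext i
    simp only [Finset.mem_filter, hmemX i]
    constructor
    · rintro ⟨hi, rfl⟩; exact hi
    · intro hi
      have hc := hTcolor h i hi
      exact ⟨by rwa [hc], hc⟩
  have hdisj : ∀ x ∈ (Finset.univ : Finset (Fin k)), ∀ y ∈ (Finset.univ : Finset (Fin k)),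
      x ≠ y → Disjoint (T x) (T y) := by
    intro x _ y _ hxy
    refine Finset.disjoint_left.2 fun i hix hiy => hxy ?_
    rw [← hTcolor x i hix, hTcolor y i hiy]
  have hcardX : X.card = k * m := by
    rw [hX, Finset.card_biUnion hdisj]
    simp [hT3, Finset.sum_const, Finset.card_univ]
  have hfair : ∀ h : Fin k, k * (X.filter (fun i => color i = h)).card = X.card := by
    intro h
    rw [hfilter, hT3, hcardX]
  -- weight bounds
  have hsplit : ∑ i ∈ X \ C, w i + ∑ i ∈ C, w i = ∑ i ∈ X, w i :=
    Finset.sum_sdiff hCX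
  have hcard_sdiff : (X \ C).card = k * m - m := by
    rw [Finset.card_sdiff_of_subset hCX, hcardX]
  have hmk : m ≤ k * m := Nat.le_mul_of_pos_left m hk
  have hA : ∑ i ∈ X \ C, w i ≤ ((k : ℝ) * m - m) * wM := by
    calc ∑ i ∈ X \ C, w i ≤ ∑ _i ∈ X \ C, wM := Finset.sum_le_sum fun i _ => hge i
    _ = ((X \ C).card : ℝ) * wM := by rw [Finset.sum_const, nsmul_eq_mul]
    _ = ((k : ℝ) * m - m) * wM := by
        rw [hcard_sdiff, Nat.cast_sub hmk, Nat.cast_mul]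
  have hB : (m : ℝ) * wm ≤ ∑ i ∈ C, w i := by
    calc (m : ℝ) * wm = ∑ _i ∈ C, wm := by rw [Finset.sum_const, nsmul_eq_mul, hm]
    _ ≤ ∑ i ∈ C, w i := Finset.sum_le_sum fun i _ => hle i
  have hCpos : (0:ℝ) ≤ ∑ i ∈ C, w i := Finset.sum_nonneg fun i _ => (hw i).le
  have hk1 : (1:ℝ) ≤ (k:ℝ) := by exact_mod_cast hk
  have hmain : ∑ i ∈ X, w i ≤ (1 + ((k : ℝ) - 1) * Δ) * ∑ i ∈ C, w i := by
    have h1 : ∑ i ∈ X \ C, w i ≤ ((k:ℝ) - 1) * Δ * ((m:ℝ) * wm) := by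
      calc ∑ i ∈ X \ C, w i ≤ ((k : ℝ) * m - m) * wM := hA
      _ = ((k:ℝ) - 1) * Δ * ((m:ℝ) * wm) := by rw [← hΔwm]; ring
    have h2 : ((k:ℝ) - 1) * Δ * ((m:ℝ) * wm) ≤ ((k:ℝ) - 1) * Δ * ∑ i ∈ C, w i := by
      apply mul_le_mul_of_nonneg_left hB
      have : (0:ℝ) ≤ (k:ℝ) - 1 := by linarith
      positivity
    nlinarith [hsplit]
  have hΔC : (1 + ((k : ℝ) - 1) * Δ) * ∑ i ∈ C, w i ≤ (k : ℝ) * Δ * ∑ i ∈ C, w i := by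
    apply mul_le_mul_of_nonneg_right _ hCpos
    nlinarith
  refine ⟨X, hCX, fun e he => ?_, hfair, hmain, hmain.trans hΔC, fun hwa => ?_⟩
  · obtain ⟨i, hi, hei⟩ := hC e he
    exact ⟨i, hCX hi, hei⟩
  · have hkΔ : (0:ℝ) ≤ (k:ℝ) * Δ := by positivity
    have h3 : ∑ i ∈ Cstar, w i ≤ ∑ i ∈ Xstarw, w i := hCmin Xstarw hXstarCover
    have h4 : ∑ i ∈ C, w i ≤ a * ∑ i ∈ Xstarw, w i := by
      calc ∑ i ∈ C, w i ≤ a * ∑ i ∈ Cstar, w i := hwa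
      _ ≤ a * ∑ i ∈ Xstarw, w i := by
          apply mul_le_mul_of_nonneg_left h3 (by linarith)
    calc ∑ i ∈ X, w i ≤ (k : ℝ) * Δ * ∑ i ∈ C, w i := hmain.trans hΔC
    _ ≤ (k : ℝ) * Δ * (a * ∑ i ∈ Xstarw, w i) := mul_le_mul_of_nonneg_left h4 hkΔ
    _ = (k : ℝ) * Δ * a * ∑ i ∈ Xstarw, w i := by ring
end

section
/- Let X_ε be an ε-unfair cover such that for every color h the quantity (1+ε)·f_h·|X_ε| is a nonnegative integer and the family 𝒮_h \ X_ε contains at least (1+ε)·f_h·|X_ε| − |X_ε ∩ 𝒮_h| sets. Then there exists a fair cover X′ with X_ε ⊆ X′ and |X′| = (1+ε)·|X_ε|. In particular, the minimum size of a fair cover of (U, 𝒮) is at most (1+ε)·|X_ε|. -/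
/-!
Choose for every color `h` the integer target `m h = (1 + ε) f_h |Xε|`. Since `Xε` has at most
`m h` sets of color `h` and enough unused ones, it can be padded color by color to exactly
`m h` sets of color `h`. The padded family still covers `U`, has `∑ m h = (1 + ε)|Xε|` sets,
and its color counts `m h = f_h · (1 + ε)|Xε|` are exactly proportional.
-/

open Finset

namespace Finset

variable {ι κ : Type*} [DecidableEq ι] [Fintype ι]

lemma card_filter_add_card_univ_filter_sdiff (X : Finset ι) (p : ι → Prop) [DecidablePred p] :
    #(X.filter p) + #(univ.filter p \ X) = #(univ.filter p) := by
  rw [add_comm, ← card_sdiff_add_card_inter (univ.filter p) X, filter_inter, univ_inter]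

lemma exists_superset_card_filter_eq [DecidableEq κ] (X : Finset ι) (c : ι → κ) (m : κ → ℕ)
    (hXm : ∀ h, #(X.filter (c · = h)) ≤ m h) (hm : ∀ h, m h ≤ #(univ.filter (c · = h))) :
    ∃ X' : Finset ι, X ⊆ X' ∧ ∀ h, #(X'.filter (c · = h)) = m h := by
  choose T hXT hT hTm using fun h =>
    exists_subsuperset_card_eq (filter_subset_filter _ (subset_univ X)) (hXm h) (hm h)
  refine ⟨univ.filter fun i => i ∈ T (c i), fun i hi => ?_, fun h => ?_⟩
  · exact mem_filter.2 ⟨mem_univ i, hXT _ (mem_filter.2 ⟨hi, rfl⟩)⟩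
  · convert hTm h using 2
    ext i
    simp only [mem_filter, mem_univ, true_and]
    refine ⟨fun ⟨hi, hci⟩ => hci ▸ hi, fun hi => ?_⟩
    have hci : c i = h := (mem_filter.1 (hT h hi)).2
    exact ⟨hci ▸ hi, hci⟩

end Finset

theorem stmt_11_general {V ι : Type*} [Fintype ι] [DecidableEq ι]
    (U : Finset V) (k : ℕ) (S : ι → Finset V) (color : ι → Fin k)
    (f : Fin k → ℝ) (hf1 : ∑ h, f h = 1)
    (ε : ℝ)
    (Xε : Finset ι) (hCover : ∀ e ∈ U, ∃ i ∈ Xε, e ∈ S i)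
    (hHigh : ∀ h : Fin k, ((Xε.filter (fun i => color i = h)).card : ℝ) ≤
      (1 + ε) * f h * (Xε.card : ℝ))
    (hInt : ∀ h : Fin k, ∃ m : ℕ, (1 + ε) * f h * (Xε.card : ℝ) = (m : ℝ))
    (hAvail : ∀ h : Fin k,
      (1 + ε) * f h * (Xε.card : ℝ) - ((Xε.filter (fun i => color i = h)).card : ℝ) ≤
        ((((Finset.univ.filter (fun i => color i = h)) \ Xε).card : ℕ) : ℝ))
    (Xstar : Finset ι)
    (hXstarMin : ∀ D : Finset ι, (∀ e ∈ U, ∃ i ∈ D, e ∈ S i) →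
      (∀ h : Fin k, ((D.filter (fun i => color i = h)).card : ℝ) = f h * (D.card : ℝ)) →
      Xstar.card ≤ D.card) :
    (∃ X' : Finset ι, Xε ⊆ X' ∧ (∀ e ∈ U, ∃ i ∈ X', e ∈ S i) ∧
      (∀ h : Fin k, ((X'.filter (fun i => color i = h)).card : ℝ) = f h * (X'.card : ℝ)) ∧
      (X'.card : ℝ) = (1 + ε) * (Xε.card : ℝ)) ∧
    (Xstar.card : ℝ) ≤ (1 + ε) * (Xε.card : ℝ) := by
  choose m hm using hInt
  obtain ⟨X', hXX', hX'm⟩ := exists_superset_card_filter_eq Xε color m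
    (fun h => by exact_mod_cast (hm h ▸ hHigh h))
    (fun h => by
      rw [← card_filter_add_card_univ_filter_sdiff Xε]
      have := hm h ▸ hAvail h
      exact_mod_cast (sub_le_iff_le_add'.1 this))
  have hcard : (#X' : ℝ) = (1 + ε) * #Xε := by
    rw [card_eq_sum_card_fiberwise fun i _ => mem_univ (color i)]
    simp only [hX'm, Nat.cast_sum, ← hm, ← sum_mul, ← mul_sum, hf1, mul_one]
  have hcover : ∀ e ∈ U, ∃ i ∈ X', e ∈ S i := fun e he =>
    (hCover e he).imp fun i hi => ⟨hXX' hi.1, hi.2⟩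
  have hfair : ∀ h, (#(X'.filter (color · = h)) : ℝ) = f h * #X' := fun h => by
    rw [hX'm, ← hm, hcard]; ring
  exact ⟨⟨X', hXX', hcover, hfair, hcard⟩, hcard ▸ by exact_mod_cast hXstarMin X' hcover hfair⟩

/-- Key claim of Theorem 6.1 (padding an ε-unfair cover).  Set system with `k`
colors and prescribed nonnegative ratios `f h` summing to 1.  A fair cover `X`
satisfies `|X ∩ 𝒮_h| = f h · |X|` for every color; an ε-unfair cover satisfies
`(1-ε) f h |X| ≤ |X ∩ 𝒮_h| ≤ (1+ε) f h |X|`.  If `Xε` is an ε-unfair cover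
such that for every color `(1+ε)·f h·|Xε|` is a nonnegative integer and
`𝒮_h \ Xε` has at least `(1+ε)·f h·|Xε| − |Xε ∩ 𝒮_h|` sets, then there is a
fair cover `X′ ⊇ Xε` with `|X′| = (1+ε)·|Xε|`; in particular, the minimum fair
cover size is at most `(1+ε)·|Xε|`. -/
theorem stmt_11 {V ι : Type*} [DecidableEq V] [Fintype ι] [DecidableEq ι]
    (U : Finset V) (k : ℕ) (S : ι → Finset V) (color : ι → Fin k)
    (hUnion : Finset.univ.biUnion S = U)
    (f : Fin k → ℝ) (hf0 : ∀ h, 0 ≤ f h) (hf1 : ∑ h, f h = 1)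
    (ε : ℝ) (hε0 : 0 < ε) (hε1 : ε < 1)
    (Xε : Finset ι) (hCover : ∀ e ∈ U, ∃ i ∈ Xε, e ∈ S i)
    (hLow : ∀ h : Fin k, (1 - ε) * f h * (Xε.card : ℝ) ≤
      ((Xε.filter (fun i => color i = h)).card : ℝ))
    (hHigh : ∀ h : Fin k, ((Xε.filter (fun i => color i = h)).card : ℝ) ≤
      (1 + ε) * f h * (Xε.card : ℝ))
    (hInt : ∀ h : Fin k, ∃ m : ℕ, (1 + ε) * f h * (Xε.card : ℝ) = (m : ℝ))
    (hAvail : ∀ h : Fin k,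
      (1 + ε) * f h * (Xε.card : ℝ) - ((Xε.filter (fun i => color i = h)).card : ℝ) ≤
        ((((Finset.univ.filter (fun i => color i = h)) \ Xε).card : ℕ) : ℝ))
    (Xstar : Finset ι) (hXstarCover : ∀ e ∈ U, ∃ i ∈ Xstar, e ∈ S i)
    (hXstarFair : ∀ h : Fin k,
      ((Xstar.filter (fun i => color i = h)).card : ℝ) = f h * (Xstar.card : ℝ))
    (hXstarMin : ∀ D : Finset ι, (∀ e ∈ U, ∃ i ∈ D, e ∈ S i) →
      (∀ h : Fin k, ((D.filter (fun i => color i = h)).card : ℝ) = f h * (D.card : ℝ)) →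
      Xstar.card ≤ D.card) :
    (∃ X' : Finset ι, Xε ⊆ X' ∧ (∀ e ∈ U, ∃ i ∈ X', e ∈ S i) ∧
      (∀ h : Fin k, ((X'.filter (fun i => color i = h)).card : ℝ) = f h * (X'.card : ℝ)) ∧
      (X'.card : ℝ) = (1 + ε) * (Xε.card : ℝ)) ∧
    (Xstar.card : ℝ) ≤ (1 + ε) * (Xε.card : ℝ) :=
  stmt_11_general U k S color f hf1 ε Xε hCover hHigh hInt hAvail Xstar hXstarMin
end

section
/- Let X*_ε be a minimum-size ε-unfair cover and assume that for every color h the quantity (1+ε)·f_h·|X*_ε| is a nonnegative integer and 𝒮_h \ X*_ε contains at least (1+ε)·f_h·|X*_ε| − |X*_ε ∩ 𝒮_h| sets. If X is a fair cover with |X| ≤ α·|X*|, where α ≥ 1 and X* is a minimum-size fair cover, then X is an ε-unfair cover and |X| ≤ (1+ε)·α·|X*_ε|. -/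
/-- Theorem 6.1: any α-approximation for the generalized fair set cover problem
is a (1+ε)α-approximation for its ε-unfair relaxation.  With prescribed
nonnegative ratios `f h` summing to 1 and `ε ∈ (0,1)`: let `Xεstar` be a
minimum-size ε-unfair cover such that for every color `(1+ε)·f h·|Xεstar|` is a
nonnegative integer and `𝒮_h \ Xεstar` has at least
`(1+ε)·f h·|Xεstar| − |Xεstar ∩ 𝒮_h|` sets.  If `X` is a fair cover with
`|X| ≤ a·|Xstar|`, where `a ≥ 1` and `Xstar` is a minimum-size fair cover, then
`X` is an ε-unfair cover and `|X| ≤ (1+ε)·a·|Xεstar|`. -/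
theorem stmt_12 {V ι : Type*} [DecidableEq V] [Fintype ι] [DecidableEq ι]
    (U : Finset V) (k : ℕ) (S : ι → Finset V) (color : ι → Fin k)
    (hUnion : Finset.univ.biUnion S = U)
    (f : Fin k → ℝ) (hf0 : ∀ h, 0 ≤ f h) (hf1 : ∑ h, f h = 1)
    (ε : ℝ) (hε0 : 0 < ε) (hε1 : ε < 1)
    (Xεstar : Finset ι) (hεCover : ∀ e ∈ U, ∃ i ∈ Xεstar, e ∈ S i)
    (hεLow : ∀ h : Fin k, (1 - ε) * f h * (Xεstar.card : ℝ) ≤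
      ((Xεstar.filter (fun i => color i = h)).card : ℝ))
    (hεHigh : ∀ h : Fin k, ((Xεstar.filter (fun i => color i = h)).card : ℝ) ≤
      (1 + ε) * f h * (Xεstar.card : ℝ))
    (hεMin : ∀ D : Finset ι, (∀ e ∈ U, ∃ i ∈ D, e ∈ S i) →
      (∀ h : Fin k, (1 - ε) * f h * (D.card : ℝ) ≤ ((D.filter (fun i => color i = h)).card : ℝ) ∧
        ((D.filter (fun i => color i = h)).card : ℝ) ≤ (1 + ε) * f h * (D.card : ℝ)) →
      Xεstar.card ≤ D.card)
    (hInt : ∀ h : Fin k, ∃ m : ℕ, (1 + ε) * f h * (Xεstar.card : ℝ) = (m : ℝ))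
    (hAvail : ∀ h : Fin k,
      (1 + ε) * f h * (Xεstar.card : ℝ) - ((Xεstar.filter (fun i => color i = h)).card : ℝ) ≤
        ((((Finset.univ.filter (fun i => color i = h)) \ Xεstar).card : ℕ) : ℝ))
    (Xstar : Finset ι) (hXstarCover : ∀ e ∈ U, ∃ i ∈ Xstar, e ∈ S i)
    (hXstarFair : ∀ h : Fin k,
      ((Xstar.filter (fun i => color i = h)).card : ℝ) = f h * (Xstar.card : ℝ))
    (hXstarMin : ∀ D : Finset ι, (∀ e ∈ U, ∃ i ∈ D, e ∈ S i) →
      (∀ h : Fin k, ((D.filter (fun i => color i = h)).card : ℝ) = f h * (D.card : ℝ)) →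
      Xstar.card ≤ D.card)
    (X : Finset ι) (hXCover : ∀ e ∈ U, ∃ i ∈ X, e ∈ S i)
    (hXFair : ∀ h : Fin k,
      ((X.filter (fun i => color i = h)).card : ℝ) = f h * (X.card : ℝ))
    (a : ℝ) (ha : 1 ≤ a)
    (hXapprox : (X.card : ℝ) ≤ a * (Xstar.card : ℝ)) :
    (∀ h : Fin k, (1 - ε) * f h * (X.card : ℝ) ≤ ((X.filter (fun i => color i = h)).card : ℝ) ∧
      ((X.filter (fun i => color i = h)).card : ℝ) ≤ (1 + ε) * f h * (X.card : ℝ)) ∧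
    (X.card : ℝ) ≤ (1 + ε) * a * (Xεstar.card : ℝ) := by
  classical
  constructor
  · intro h
    have hfx : (0:ℝ) ≤ f h * (X.card : ℝ) :=
      mul_nonneg (hf0 h) (Nat.cast_nonneg _)
    rw [hXFair h]
    constructor
    · nlinarith
    · nlinarith
  · -- build a fair cover Y of size (1+ε)|Xεstar|
    choose m hm using hInt
    set c : Fin k → ℕ := fun h => (Xεstar.filter (fun i => color i = h)).card with hcdef
    have hcm : ∀ h, c h ≤ m h := by
      intro h
      have : (c h : ℝ) ≤ (m h : ℝ) := (hεHigh h).trans_eq (hm h)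
      exact_mod_cast this
    have hAvail' : ∀ h, m h - c h ≤ ((Finset.univ.filter (fun i => color i = h)) \ Xεstar).card := by
      intro h
      have h1 := hAvail h
      rw [hm h] at h1
      have hn : m h ≤ ((Finset.univ.filter (fun i => color i = h)) \ Xεstar).card + c h := by
        have : (m h : ℝ) ≤ (((Finset.univ.filter (fun i => color i = h)) \ Xεstar).card : ℝ) + c h := by
          linarith
        exact_mod_cast this
      omega
    have hT : ∀ h, ∃ T ⊆ (Finset.univ.filter (fun i => color i = h)) \ Xεstar,
        T.card = m h - c h := fun h => Finset.exists_subset_card_eq (hAvail' h)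
    choose T hTsub hTcard using hT
    set Y : Finset ι := Xεstar ∪ Finset.univ.biUnion T with hYdef
    have hTcolor : ∀ h i, i ∈ T h → color i = h := by
      intro h i hi
      have := hTsub h hi
      simp only [Finset.mem_sdiff, Finset.mem_filter] at this
      exact this.1.2
    have hTXε : ∀ h i, i ∈ T h → i ∉ Xεstar := by
      intro h i hi
      have := hTsub h hi
      simp only [Finset.mem_sdiff] at this
      exact this.2
    have hYfilter : ∀ h, Y.filter (fun i => color i = h) =
        Xεstar.filter (fun i => color i = h) ∪ T h := by
      intro h
      ext i
      simp only [hYdef, Finset.mem_filter, Finset.mem_union, Finset.mem_biUnion,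
        Finset.mem_univ, true_and]
      constructor
      · rintro ⟨hi | ⟨h', hi⟩, hcol⟩
        · exact Or.inl ⟨hi, hcol⟩
        · have := hTcolor h' i hi
          rw [this] at hcol
          subst hcol
          exact Or.inr hi
      · rintro (⟨hi, hcol⟩ | hi)
        · exact ⟨Or.inl hi, hcol⟩
        · exact ⟨Or.inr ⟨h, hi⟩, hTcolor h i hi⟩
    have hYfiltercard : ∀ h, (Y.filter (fun i => color i = h)).card = m h := by
      intro h
      rw [hYfilter h, Finset.card_union_of_disjoint]
      · have := hTcard h
        have := hcm h
        simp only [hcdef] at *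
        omega
      · refine Finset.disjoint_left.mpr ?_
        intro i hi hi'
        exact hTXε h i hi' (Finset.mem_filter.mp hi).1
    have hYcard : Y.card = ∑ h, m h := by
      rw [Finset.card_eq_sum_card_fiberwise (f := color) (t := Finset.univ)
        (fun i _ => Finset.mem_univ _)]
      exact Finset.sum_congr rfl fun h _ => hYfiltercard h
    have hYcardR : (Y.card : ℝ) = (1 + ε) * (Xεstar.card : ℝ) := by
      rw [hYcard]
      push_cast
      have hs : ∑ x : Fin k, ((m x : ℝ)) = ∑ x : Fin k, (1 + ε) * f x * (Xεstar.card : ℝ) :=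
        Finset.sum_congr rfl fun h _ => (hm h).symm
      rw [hs, ← Finset.sum_mul, ← Finset.mul_sum, hf1]
      ring
    have hYcover : ∀ e ∈ U, ∃ i ∈ Y, e ∈ S i := by
      intro e he
      obtain ⟨i, hi, hei⟩ := hεCover e he
      exact ⟨i, Finset.mem_union_left _ hi, hei⟩
    have hYfair : ∀ h, ((Y.filter (fun i => color i = h)).card : ℝ) = f h * (Y.card : ℝ) := by
      intro h
      rw [hYfiltercard h, ← hm h, hYcardR]
      ring
    have hXstarY : (Xstar.card : ℝ) ≤ (Y.card : ℝ) := by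
      exact_mod_cast hXstarMin Y hYcover hYfair
    have ha0 : (0:ℝ) ≤ a := le_trans zero_le_one ha
    calc (X.card : ℝ) ≤ a * (Xstar.card : ℝ) := hXapprox
      _ ≤ a * (Y.card : ℝ) := by nlinarith
      _ = (1 + ε) * a * (Xεstar.card : ℝ) := by rw [hYcardR]; ring
end
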